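/- In the space c of convergent real sequences with the supremum norm, the point e = (1, 1, 1, …) is a strongly extreme point of the unit ball. -/

import Mathlib

open Filter Topology BoundedContinuousFunction

lemma abs_add_one_le_max_abs_one_add_abs_one_sub (x : ℝ) :
    |x| + 1 ≤ max |1 + x| |1 - x| := by
  rcases le_total 0 x with hx | hx
  · exact le_max_of_le_left (by rw [abs_of_nonneg hx]; linarith [le_abs_self (1 + x)])
  · exact le_max_of_le_right (by rw [abs_of_nonpos hx]; linarith [le_abs_self (1 - x)])

lemma BoundedContinuousFunction.norm_le_max_norm_const_one_add_sub {α : Type*}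
    [TopologicalSpace α] [Nonempty α] (f : α →ᵇ ℝ) :
    ‖f‖ ≤ max ‖const α (1 : ℝ) + f‖ ‖const α (1 : ℝ) - f‖ - 1 := by
  have hpoint (x : α) : |f x| + 1 ≤ max ‖const α (1 : ℝ) + f‖ ‖const α (1 : ℝ) - f‖ := by
    calc |f x| + 1 ≤ max |1 + f x| |1 - f x| := abs_add_one_le_max_abs_one_add_abs_one_sub (f x)
      _ = max ‖(const α (1 : ℝ) + f) x‖ ‖(const α (1 : ℝ) - f) x‖ := rfl
      _ ≤ _ := max_le_max (norm_coe_le_norm _ x) (norm_coe_le_norm _ x)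
  have hnonneg : 0 ≤ max ‖const α (1 : ℝ) + f‖ ‖const α (1 : ℝ) - f‖ - 1 := by
    linarith [hpoint (Classical.arbitrary α), abs_nonneg (f (Classical.arbitrary α))]
  exact (norm_le hnonneg).2 fun x => by linarith [hpoint x, Real.norm_eq_abs (f x)]

theorem stmt7 :
    ∀ v : ℕ → (ℕ →ᵇ ℝ), (∀ n, ∃ l : ℝ, Tendsto (⇑(v n)) atTop (nhds l)) →
      Tendsto (fun n => ‖BoundedContinuousFunction.const ℕ (1 : ℝ) + v n‖) atTop (nhds 1) →
      Tendsto (fun n => ‖BoundedContinuousFunction.const ℕ (1 : ℝ) - v n‖) atTop (nhds 1) →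
      Tendsto (fun n => ‖v n‖) atTop (nhds 0) := by
  intro v _ hadd hsub
  have hmax : Tendsto (fun n => max ‖const ℕ (1 : ℝ) + v n‖ ‖const ℕ (1 : ℝ) - v n‖ - 1)
      atTop (𝓝 0) := by
    simpa using (hadd.max hsub).sub_const 1
  exact squeeze_zero (fun n => norm_nonneg _)
    (fun n => norm_le_max_norm_const_one_add_sub (v n)) hmax
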